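/- arXiv:1807.02868 — 2 statements merged into one kernel-verified Lean document; each statement's English description precedes it below -/
import Mathlib

section
/- Let A = □(r → ◇(¬r ∧ p ∧ ◇¬p)) and C = (r ∧ ◇□s ∧ ◇□¬s) → ◇(¬r ∧ ◇□s ∧ ◇□¬s), for distinct propositional letters p, r, s. Then the formula A → C belongs to PL₂: for every n ≥ 1, A → C is true at every world of the crown frame 𝔠_n under every valuation assigning arbitrary subsets of S_n, with Kripke semantics. -/
/-- Modal formulas over countably many propositional letters, built from
`⊥`, `¬`, `∨` and `◇`. -/
inductive Fml : Type
  | bot : Fml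
  | var : ℕ → Fml
  | neg : Fml → Fml
  | or : Fml → Fml → Fml
  | dia : Fml → Fml

/-- Defined connectives: `φ ∧ ψ`, `φ → ψ`, `□φ := ¬◇¬φ`. -/
def Fml.and (φ ψ : Fml) : Fml := .neg (.or (.neg φ) (.neg ψ))
def Fml.imp (φ ψ : Fml) : Fml := .or (.neg φ) ψ
def Fml.box (φ : Fml) : Fml := .neg (.dia (.neg φ))

/-- Kripke semantics: the set of worlds of the frame `(W, R)` at which a formula is true. -/
def kripkeSem {W : Type*} (R : W → W → Prop) (ν : ℕ → Set W) : Fml → Set W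
  | .bot => ∅
  | .var p => ν p
  | .neg φ => (kripkeSem R ν φ)ᶜ
  | .or φ ψ => kripkeSem R ν φ ∪ kripkeSem R ν ψ
  | .dia φ => {w | ∃ v, R w v ∧ v ∈ kripkeSem R ν φ}

/-- The accessibility relation `Q_n` of the crown frame `𝔠_n` on worlds `Fin (2n+1)`,
where world `0` is the root `r` and world `i` (for `1 ≤ i ≤ 2n`) is `sᵢ`:
the smallest reflexive relation such that the root sees every `sᵢ`, every even
`sᵢ` with `i < 2n` sees `s_{i-1}` and `s_{i+1}`, and `s_{2n}` sees `s_{2n-1}` and `s₁`. -/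
def crownRel (n : ℕ) (x y : Fin (2 * n + 1)) : Prop :=
  x = y ∨ x.val = 0 ∨
    (x.val % 2 = 0 ∧ x.val ≠ 0 ∧
      (y.val + 1 = x.val ∨ y.val = x.val + 1 ∨ (x.val = 2 * n ∧ y.val = 1)))

/-- The formula `A = □(r → ◇(¬r ∧ p ∧ ◇¬p))`, with `p,r,s` the letters `0,1,2`. -/
def fmlA : Fml :=
  Fml.box ((Fml.var 1).imp
    (Fml.dia (((Fml.var 1).neg).and ((Fml.var 0).and (Fml.dia ((Fml.var 0).neg))))))

/-- The formula `C = (r ∧ ◇□s ∧ ◇□¬s) → ◇(¬r ∧ ◇□s ∧ ◇□¬s)`, with `p,r,s` the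
letters `0,1,2`. -/
def fmlC : Fml :=
  ((Fml.var 1).and ((Fml.dia (Fml.box (Fml.var 2))).and
      (Fml.dia (Fml.box ((Fml.var 2).neg))))).imp
    (Fml.dia (((Fml.var 1).neg).and ((Fml.dia (Fml.box (Fml.var 2))).and
      (Fml.dia (Fml.box ((Fml.var 2).neg))))))

section SatLemmas
variable {W : Type*} {R : W → W → Prop} {ν : ℕ → Set W}

lemma sat_neg {φ : Fml} {w : W} : w ∈ kripkeSem R ν φ.neg ↔ w ∉ kripkeSem R ν φ := Iff.rfl

lemma sat_dia {φ : Fml} {w : W} :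
    w ∈ kripkeSem R ν (.dia φ) ↔ ∃ v, R w v ∧ v ∈ kripkeSem R ν φ := Iff.rfl

lemma sat_var {p : ℕ} {w : W} : w ∈ kripkeSem R ν (.var p) ↔ w ∈ ν p := Iff.rfl

lemma sat_imp {φ ψ : Fml} {w : W} :
    w ∈ kripkeSem R ν (φ.imp ψ) ↔ (w ∈ kripkeSem R ν φ → w ∈ kripkeSem R ν ψ) := by
  simp only [Fml.imp, kripkeSem, Set.mem_union, Set.mem_compl_iff]
  tauto

lemma sat_and {φ ψ : Fml} {w : W} :
    w ∈ kripkeSem R ν (φ.and ψ) ↔ (w ∈ kripkeSem R ν φ ∧ w ∈ kripkeSem R ν ψ) := by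
  simp only [Fml.and, kripkeSem, Set.mem_compl_iff, Set.mem_union]
  tauto

lemma sat_box {φ : Fml} {w : W} :
    w ∈ kripkeSem R ν (.box φ) ↔ ∀ v, R w v → v ∈ kripkeSem R ν φ := by
  simp only [Fml.box, kripkeSem, Set.mem_compl_iff, Set.mem_setOf_eq]
  push_neg
  rfl

end SatLemmas

/-- reflexivity of the crown relation -/
lemma crown_refl {n : ℕ} (x : Fin (2 * n + 1)) : crownRel n x x := Or.inl rfl

/-- the root sees everything -/
lemma crown_root {n : ℕ} {x : Fin (2 * n + 1)} (h : x.val = 0) (y : Fin (2 * n + 1)) :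
    crownRel n x y := Or.inr (Or.inl h)

/-- odd spikes only see themselves -/
lemma crown_odd {n : ℕ} {x y : Fin (2 * n + 1)} (hx : x.val % 2 = 1) (h : crownRel n x y) :
    y = x := by
  rcases h with h | h | ⟨h, -, -⟩
  · exact h.symm
  · omega
  · omega

/-- A non-root world where the body of `fmlA` holds cannot satisfy `r`. -/
lemma notR {n : ℕ} {μ : ℕ → Set (Fin (2 * n + 1))} {v : Fin (2 * n + 1)} (hv : v.val ≠ 0)
    (hbody : v ∈ μ 1 → ∃ y, crownRel n v y ∧ y ∉ μ 1 ∧ y ∈ μ 0 ∧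
      ∃ z, crownRel n y z ∧ z ∉ μ 0) :
    v ∉ μ 1 := by
  intro hv1
  obtain ⟨y, hvy, hy1, hy0, z, hyz, hz0⟩ := hbody hv1
  rcases Nat.mod_two_eq_zero_or_one y.val with hy | hy
  · -- y even: from crownRel v y with v ≠ 0 we get y = v, contradicting y ∉ μ 1
    rcases hvy with h | h | ⟨he, -, hc⟩
    · exact hy1 (h ▸ hv1)
    · exact hv h
    · rcases hc with h | h | ⟨-, h⟩ <;> omega
  · -- y odd: its only successor is itself, contradicting y ∈ μ 0 / z ∉ μ 0
    exact hz0 ((crown_odd hy hyz) ▸ hy0)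

/-- the k-th odd spike (cyclically), for `1 ≤ n` -/
def oddSpike (n : ℕ) (hn : 1 ≤ n) (k : ℕ) : Fin (2 * n + 1) :=
  ⟨2 * (k % n) + 1, by have := Nat.mod_lt k hn; omega⟩

/-- The formula `A → C` belongs to `PL₂`: it is valid on every crown frame. -/
theorem A_imp_C_valid_on_crowns :
    ∀ n, 1 ≤ n → ∀ (μ : ℕ → Set (Fin (2 * n + 1))) (w : Fin (2 * n + 1)),
      w ∈ kripkeSem (crownRel n) μ (fmlA.imp fmlC) := by
  intro n hn μ w
  rw [sat_imp]
  intro hA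
  rw [fmlC, sat_imp, sat_and, sat_and]
  rintro ⟨hw1, ⟨u, hwu, hu⟩, ⟨v, hwv, hv⟩⟩
  rw [sat_var] at hw1
  rw [sat_box] at hu hv
  simp only [sat_var, sat_neg] at hu hv
  -- clean up hA
  rw [fmlA, sat_box] at hA
  have hA' : ∀ x : Fin (2 * n + 1), crownRel n w x → x ∈ μ 1 →
      ∃ y, crownRel n x y ∧ y ∉ μ 1 ∧ y ∈ μ 0 ∧ ∃ z, crownRel n y z ∧ z ∉ μ 0 := by
    intro x hx hx1
    have := hA x hx
    rw [sat_imp, sat_var, sat_dia] at this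
    obtain ⟨y, hxy, hy⟩ := this hx1
    rw [sat_and, sat_and, sat_neg, sat_var, sat_var, sat_dia] at hy
    obtain ⟨h1, h2, z, hz, hz'⟩ := hy
    exact ⟨y, hxy, h1, h2, z, hz, sat_neg.mp hz' ⟩
  -- w is the root
  have hw0 : w.val = 0 := by
    by_contra h
    exact notR h (hA' w (crown_refl w)) hw1
  -- u and v are not the root
  have hu0 : u.val ≠ 0 := fun h => (hv v (crown_refl v)) (hu v (crown_root h v))
  have hv0 : v.val ≠ 0 := fun h => (hv u (crown_root h u)) (hu u (crown_refl u))
  -- from u get an odd spike in μ 2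
  have hi : ∃ i < n, oddSpike n hn i ∈ μ 2 := by
    rcases Nat.mod_two_eq_zero_or_one u.val with hpar | hpar
    · refine ⟨(u.val - 1) / 2, by omega, hu _ ?_⟩
      refine Or.inr (Or.inr ⟨hpar, hu0, Or.inl ?_⟩)
      have h1 : u.val < 2 * n + 1 := u.isLt
      show 2 * ((u.val - 1) / 2 % n) + 1 + 1 = u.val
      have : (u.val - 1) / 2 < n := by omega
      rw [Nat.mod_eq_of_lt this]; omega
    · refine ⟨u.val / 2, by have := u.isLt; omega, ?_⟩
      have : oddSpike n hn (u.val / 2) = u := by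
        apply Fin.ext
        show 2 * (u.val / 2 % n) + 1 = u.val
        have h1 : u.val < 2 * n + 1 := u.isLt
        have : u.val / 2 < n := by omega
        rw [Nat.mod_eq_of_lt this]; omega
      rw [this]; exact hu u (crown_refl u)
  -- from v get an odd spike not in μ 2
  have hj : ∃ j < n, oddSpike n hn j ∉ μ 2 := by
    rcases Nat.mod_two_eq_zero_or_one v.val with hpar | hpar
    · refine ⟨(v.val - 1) / 2, by omega, hv _ ?_⟩
      refine Or.inr (Or.inr ⟨hpar, hv0, Or.inl ?_⟩)
      have h1 : v.val < 2 * n + 1 := v.isLt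
      show 2 * ((v.val - 1) / 2 % n) + 1 + 1 = v.val
      have : (v.val - 1) / 2 < n := by omega
      rw [Nat.mod_eq_of_lt this]; omega
    · refine ⟨v.val / 2, by have := v.isLt; omega, ?_⟩
      have : oddSpike n hn (v.val / 2) = v := by
        apply Fin.ext
        show 2 * (v.val / 2 % n) + 1 = v.val
        have h1 : v.val < 2 * n + 1 := v.isLt
        have : v.val / 2 < n := by omega
        rw [Nat.mod_eq_of_lt this]; omega
      rw [this]; exact hv v (crown_refl v)
  obtain ⟨i, hiN, hiS⟩ := hi
  obtain ⟨j, hjN, hjS⟩ := hj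
  -- find a switch point on the cycle of odd spikes
  set P : ℕ → Prop := fun k => oddSpike n hn k ∈ μ 2 with hP
  have hper : ∀ k, P (k + 1) ↔ P (k % n + 1) := by
    intro k
    have : oddSpike n hn (k + 1) = oddSpike n hn (k % n + 1) := by
      apply Fin.ext
      show 2 * ((k + 1) % n) + 1 = 2 * ((k % n + 1) % n) + 1
      rw [Nat.add_mod k 1 n, Nat.add_mod (k % n) 1 n, Nat.mod_mod_of_dvd _ dvd_rfl]
    rw [hP]; simp only [this]
  have hmod : ∀ k, P k ↔ P (k % n) := by
    intro k
    have : oddSpike n hn k = oddSpike n hn (k % n) := by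
      apply Fin.ext
      show 2 * (k % n) + 1 = 2 * (k % n % n) + 1
      rw [Nat.mod_mod_of_dvd _ dvd_rfl]
    rw [hP]; simp only [this]
  -- there is a switch on the cycle
  have hsw : ∃ k < n, ¬(P k ↔ P (k + 1)) := by
    by_contra h
    push_neg at h
    have step : ∀ k, P k ↔ P (k + 1) := by
      intro k
      have hk : k % n < n := Nat.mod_lt k hn
      exact (hmod k).trans (((h _ hk).trans ((hper k).symm)).symm).symm
    have all : ∀ m, P i ↔ P (i + m) := by
      intro m
      induction m with
      | zero => rfl
      | succ m ih => exact ih.trans (step (i + m))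
    have h1 := all (j + n - i)
    have h2 : i + (j + n - i) = j + n := by omega
    rw [h2] at h1
    have h3 : (j + n) % n = j % n := Nat.add_mod_right j n
    have h4 : P (j + n) ↔ P j := by rw [hmod (j + n), h3, ← hmod j]
    have hPi : P i := hiS
    exact hjS (h4.mp (h1.mp hPi))
  obtain ⟨k, hkN, hkS⟩ := hsw
  -- the even spike between the switching odd spikes
  set e : Fin (2 * n + 1) := ⟨2 * k + 2, by omega⟩ with he
  have hwe : crownRel n w e := crown_root hw0 e
  have he1 : e ∉ μ 1 := notR (by show 2 * k + 2 ≠ 0; omega) (hA' e hwe)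
  have hek : crownRel n e (oddSpike n hn k) := by
    refine Or.inr (Or.inr ⟨by show (2 * k + 2) % 2 = 0; omega, by show 2 * k + 2 ≠ 0; omega,
      Or.inl ?_⟩)
    show 2 * (k % n) + 1 + 1 = 2 * k + 2
    rw [Nat.mod_eq_of_lt hkN]
  have hek1 : crownRel n e (oddSpike n hn (k + 1)) := by
    refine Or.inr (Or.inr ⟨by show (2 * k + 2) % 2 = 0; omega, by show 2 * k + 2 ≠ 0; omega, ?_⟩)
    rcases Nat.lt_or_ge (k + 1) n with hlt | hge
    · refine Or.inr (Or.inl ?_)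
      show 2 * ((k + 1) % n) + 1 = 2 * k + 2 + 1
      rw [Nat.mod_eq_of_lt hlt]; omega
    · have hkn : k + 1 = n := by omega
      refine Or.inr (Or.inr ⟨by show 2 * k + 2 = 2 * n; omega, ?_⟩)
      show 2 * ((k + 1) % n) + 1 = 1
      rw [hkn, Nat.mod_self]
  have hodd : ∀ m t, crownRel n (oddSpike n hn m) t → t = oddSpike n hn m := by
    intro m t ht
    exact crown_odd (by show (2 * (m % n) + 1) % 2 = 1; omega) ht
  have build : ∀ a b : Fin (2 * n + 1), crownRel n e a → crownRel n e b →
      (∀ t, crownRel n a t → t = a) → (∀ t, crownRel n b t → t = b) →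
      a ∈ μ 2 → b ∉ μ 2 →
      w ∈ kripkeSem (crownRel n) μ (Fml.dia (((Fml.var 1).neg).and
        ((Fml.dia (Fml.box (Fml.var 2))).and (Fml.dia (Fml.box ((Fml.var 2).neg)))))) := by
    intro a b hea heb ha hb haS hbS
    rw [sat_dia]
    refine ⟨e, hwe, ?_⟩
    rw [sat_and, sat_and, sat_neg, sat_var, sat_dia, sat_dia]
    refine ⟨he1, ⟨a, hea, ?_⟩, ⟨b, heb, ?_⟩⟩
    · rw [sat_box]
      intro t ht
      rw [sat_var, ha t ht]
      exact haS
    · rw [sat_box]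
      intro t ht
      rw [sat_neg, sat_var, hb t ht]
      exact hbS
  by_cases hPk : P k
  · exact build _ _ hek hek1 (hodd k) (hodd (k + 1)) hPk (by tauto)
  · exact build _ _ hek1 hek (hodd (k + 1)) (hodd k) (by tauto) hPk
end

section
/- There do not exist two nonempty disjoint polygons A₁, A₂ ∈ P₂ whose topological closures coincide: if A₁, A₂ ∈ P₂ are nonempty, A₁ ∩ A₂ = ∅, then cl(A₁) ≠ cl(A₂). -/
/-- The Boolean subalgebra of the powerset of `X` generated by a family `G` of subsets. -/
inductive BoolGen {X : Type*} (G : Set (Set X)) : Set X → Prop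
  | base (A : Set X) : A ∈ G → BoolGen G A
  | empty : BoolGen G ∅
  | univ : BoolGen G Set.univ
  | union (A B : Set X) : BoolGen G A → BoolGen G B → BoolGen G (A ∪ B)
  | inter (A B : Set X) : BoolGen G A → BoolGen G B → BoolGen G (A ∩ B)
  | compl (A : Set X) : BoolGen G A → BoolGen G Aᶜ

/-- The closed half-spaces `{x ∈ ℝⁿ : ℓ(x) ≤ a}`. -/
def halfSpaces (n : ℕ) : Set (Set (EuclideanSpace ℝ (Fin n))) :=
  {H | ∃ (l : EuclideanSpace ℝ (Fin n) →ₗ[ℝ] ℝ) (a : ℝ), H = {x | l x ≤ a}}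

open Set

abbrev Pt := EuclideanSpace ℝ (Fin 2)

section RelInt

variable {V : Type*} [NormedAddCommGroup V] [NormedSpace ℝ V] [FiniteDimensional ℝ V]

/-- An ad-hoc relative interior. -/
def riSet (s : Set V) : Set V :=
  {x | x ∈ s ∧ ∃ ε > 0, ∀ y ∈ (affineSpan ℝ s : Set V), dist y x < ε → y ∈ s}

lemma riSet_subset (s : Set V) : riSet s ⊆ s := fun _ h => h.1

lemma intrinsicInterior_subset_riSet (s : Set V) : intrinsicInterior ℝ s ⊆ riSet s := by
  rintro x ⟨y, hy, rfl⟩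
  obtain ⟨ε, hε, hball⟩ := Metric.mem_nhds_iff.1 (mem_interior_iff_mem_nhds.1 hy)
  have h0 : y ∈ (Subtype.val ⁻¹' s : Set (affineSpan ℝ s)) := interior_subset hy
  refine ⟨h0, ε, hε, ?_⟩
  intro z hz hdist
  exact hball (show (⟨z, hz⟩ : affineSpan ℝ s) ∈ Metric.ball y ε by
    rw [Metric.mem_ball, Subtype.dist_eq]; exact hdist)

lemma riSet_openSegment {s : Set V} (hs : Convex ℝ s) {p q z : V}
    (hp : p ∈ riSet s) (hq : q ∈ closure s) (hz : z ∈ openSegment ℝ p q) :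
    z ∈ riSet s := by
  obtain ⟨a, b, ha, hb, hab, rfl⟩ := hz
  obtain ⟨hps, ε, hε, hball⟩ := hp
  have hane : a ≠ 0 := ne_of_gt ha
  have hpE : p ∈ affineSpan ℝ s := subset_affineSpan ℝ s hps
  have hEclosed : IsClosed (affineSpan ℝ s : Set V) :=
    (affineSpan ℝ s).closed_of_finiteDimensional
  have hqE : q ∈ affineSpan ℝ s := by
    have h := closure_mono (subset_affineSpan ℝ s) hq
    rwa [hEclosed.closure_eq] at h
  have hzE : a • p + b • q ∈ affineSpan ℝ s := by
    have h1 : b • (q -ᵥ p) +ᵥ p ∈ affineSpan ℝ s :=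
      AffineSubspace.smul_vsub_vadd_mem _ b hqE hpE hpE
    convert h1 using 1
    simp only [vsub_eq_sub, vadd_eq_add]
    have : a = 1 - b := by linarith
    rw [this]; match_scalars <;> ring
  set δ := a * ε / (2 * (1 + b)) with hδdef
  have hδ : 0 < δ := by positivity
  have key : ∀ y ∈ (affineSpan ℝ s : Set V), dist y (a • p + b • q) < δ → y ∈ s := by
    intro y hyE hy
    obtain ⟨q', hq's, hq'⟩ := Metric.mem_closure_iff.1 hq δ hδ
    set p' := a⁻¹ • (y - b • q') with hp'def
    have hq'E : q' ∈ affineSpan ℝ s := subset_affineSpan ℝ s hq's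
    have hp'E : p' ∈ affineSpan ℝ s := by
      have h1 : a⁻¹ • (y -ᵥ q') +ᵥ q' ∈ affineSpan ℝ s :=
        AffineSubspace.smul_vsub_vadd_mem _ a⁻¹ hyE hq'E hq'E
      convert h1 using 1
      simp only [vsub_eq_sub, vadd_eq_add, hp'def]
      have hb' : b = 1 - a := by linarith
      rw [hb']
      match_scalars <;> field_simp <;> ring
    have hyval : a • p' + b • q' = y := by
      rw [hp'def, smul_smul, mul_inv_cancel₀ hane, one_smul, sub_add_cancel]
    have hdiff : a • (p' - p) = (y - (a • p + b • q)) + b • (q - q') := by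
      have h2 : a • p' = y - b • q' := by
        rw [hp'def, smul_smul, mul_inv_cancel₀ hane, one_smul]
      rw [smul_sub, h2]; module
    have hdist : dist p' p < ε := by
      have hn : a * dist p' p = ‖a • (p' - p)‖ := by
        rw [norm_smul, Real.norm_eq_abs, abs_of_pos ha, dist_eq_norm]
      have hbound : ‖a • (p' - p)‖ ≤ δ + b * δ := by
        rw [hdiff]
        calc ‖(y - (a • p + b • q)) + b • (q - q')‖
            ≤ ‖y - (a • p + b • q)‖ + ‖b • (q - q')‖ := norm_add_le _ _
          _ ≤ δ + b * δ := by
              have h3 : ‖y - (a • p + b • q)‖ ≤ δ := by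
                rw [← dist_eq_norm]; exact le_of_lt hy
              have h4 : ‖b • (q - q')‖ ≤ b * δ := by
                rw [norm_smul, Real.norm_eq_abs, abs_of_pos hb]
                have : ‖q - q'‖ < δ := by
                  rw [← dist_eq_norm]; exact hq'
                nlinarith
              linarith
      have hδε : δ + b * δ = a * (ε / 2) := by
        rw [hδdef]; field_simp
      have : a * dist p' p ≤ a * (ε / 2) := by rw [hn]; linarith [hbound, hδε.symm.le]
      have := le_of_mul_le_mul_left (by linarith : a * dist p' p ≤ a * (ε/2)) ha
      linarith
    have hp's : p' ∈ s := hball p' hp'E hdist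
    rw [← hyval]
    exact hs hp's hq's ha.le hb.le hab
  exact ⟨key _ hzE (by simp [hδ]), δ, hδ, key⟩

lemma subset_closure_riSet {s : Set V} (hs : Convex ℝ s) : s ⊆ closure (riSet s) := by
  intro q hq
  obtain ⟨p, hp⟩ := Set.Nonempty.intrinsicInterior hs ⟨q, hq⟩
  have hpR : p ∈ riSet s := intrinsicInterior_subset_riSet s hp
  rw [Metric.mem_closure_iff]
  intro ε hε
  set a := min (1/2 : ℝ) (ε / (2 * (dist p q + 1))) with ha_def
  have ha : 0 < a := lt_min (by norm_num) (by positivity)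
  have ha1 : a < 1 := lt_of_le_of_lt (min_le_left _ _) (by norm_num)
  have hb : 0 < 1 - a := by linarith
  refine ⟨a • p + (1 - a) • q, ?_, ?_⟩
  · exact riSet_openSegment hs hpR (subset_closure hq)
      ⟨a, 1 - a, ha, hb, by ring, rfl⟩
  · have heq : q - (a • p + (1 - a) • q) = a • (q - p) := by module
    have hnq : ‖q - p‖ = dist p q := by rw [← dist_eq_norm, dist_comm]
    rw [dist_eq_norm, heq, norm_smul, Real.norm_eq_abs, abs_of_pos ha, hnq]
    have hd : 0 ≤ dist p q := dist_nonneg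
    have ha2 : a ≤ ε / (2 * (dist p q + 1)) := min_le_right _ _
    have h5 : ε / (2 * (dist p q + 1)) * dist p q < ε := by
      rw [div_mul_eq_mul_div, div_lt_iff₀ (by positivity)]
      nlinarith
    calc a * dist p q ≤ ε / (2 * (dist p q + 1)) * dist p q := by nlinarith
      _ < ε := h5

end RelInt

section Structure

/-- Finite closed cover refinement: if `V ∩ S` is nonempty and covered by finitely many
closed sets, one of them contains a nonempty relatively open piece. -/
lemma exists_relOpen_piece {X : Type*} [TopologicalSpace X] (S : Set X)
    (𝒯 : Set (Set X)) (hfin : 𝒯.Finite) :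
    (∀ F ∈ 𝒯, IsClosed F) → ∀ V : Set X, IsOpen V → (V ∩ S).Nonempty → V ∩ S ⊆ ⋃₀ 𝒯 →
    ∃ F ∈ 𝒯, ∃ W, IsOpen W ∧ W ⊆ V ∧ (W ∩ S).Nonempty ∧ W ∩ S ⊆ F := by
  refine Set.Finite.induction_on (motive := fun 𝒯 _ =>
    (∀ F ∈ 𝒯, IsClosed F) → ∀ V : Set X, IsOpen V → (V ∩ S).Nonempty → V ∩ S ⊆ ⋃₀ 𝒯 →
      ∃ F ∈ 𝒯, ∃ W, IsOpen W ∧ W ⊆ V ∧ (W ∩ S).Nonempty ∧ W ∩ S ⊆ F) _ hfin ?_ ?_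
  · intro _ V _ hne hsub
    obtain ⟨x, hx⟩ := hne
    exact absurd (hsub hx) (by simp)
  · intro F₀ 𝒯 hF₀ hfin ih hcl V hV hne hsub
    have hF₀cl : IsClosed F₀ := hcl F₀ (mem_insert _ _)
    rcases (V ∩ F₀ᶜ ∩ S).eq_empty_or_nonempty with hemp | hne'
    · refine ⟨F₀, mem_insert _ _, V, hV, subset_rfl, hne, ?_⟩
      intro x hx
      by_contra hxF
      exact absurd hemp (Set.nonempty_iff_ne_empty.1 ⟨x, ⟨hx.1, hxF⟩, hx.2⟩)
    · have hsub' : (V ∩ F₀ᶜ) ∩ S ⊆ ⋃₀ 𝒯 := by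
        intro x hx
        have hx' : x ∈ ⋃₀ insert F₀ 𝒯 := hsub ⟨hx.1.1, hx.2⟩
        rcases hx' with ⟨F, hF, hxF⟩
        rcases hF with rfl | hF
        · exact absurd hxF hx.1.2
        · exact ⟨F, hF, hxF⟩
      obtain ⟨F, hF, W, hW, hWsub, hWne, hWS⟩ :=
        ih (fun F hF => hcl F (mem_insert_of_mem _ hF)) (V ∩ F₀ᶜ)
          (hV.inter hF₀cl.isOpen_compl) hne' hsub'
      exact ⟨F, mem_insert_of_mem _ hF, W, hW,
        hWsub.trans inter_subset_left, hWne, hWS⟩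


/-- A cell: a finite intersection of half-planes and complements of half-planes. -/
def IsCell (K : Set Pt) : Prop :=
  ∃ ℱ : Set (Set Pt), ℱ.Finite ∧ (∀ F ∈ ℱ, F ∈ halfSpaces 2 ∨ Fᶜ ∈ halfSpaces 2) ∧ K = ⋂₀ ℱ

/-- A polygon: a finite union of cells. -/
def PolyG (A : Set Pt) : Prop :=
  ∃ 𝒦 : Set (Set Pt), 𝒦.Finite ∧ (∀ K ∈ 𝒦, IsCell K) ∧ A = ⋃₀ 𝒦

lemma convex_of_basic {F : Set Pt} (h : F ∈ halfSpaces 2 ∨ Fᶜ ∈ halfSpaces 2) :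
    Convex ℝ F := by
  rcases h with ⟨l, a, rfl⟩ | ⟨l, a, hc⟩
  · exact convex_halfSpace_le l.isLinear a
  · have : F = {x | a < l x} := by
      rw [← compl_compl F, hc]
      ext x; simp [not_le]
    rw [this]
    exact convex_halfSpace_gt l.isLinear a

lemma IsCell.convex {K : Set Pt} (h : IsCell K) : Convex ℝ K := by
  obtain ⟨ℱ, -, hb, rfl⟩ := h
  exact convex_sInter fun F hF => convex_of_basic (hb F hF)

lemma IsCell.inter {K L : Set Pt} (hK : IsCell K) (hL : IsCell L) : IsCell (K ∩ L) := by
  obtain ⟨ℱ, hf, hb, rfl⟩ := hK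
  obtain ⟨𝒢, hg, hb', rfl⟩ := hL
  exact ⟨ℱ ∪ 𝒢, hf.union hg, fun F hF => hF.elim (hb F) (hb' F), (sInter_union _ _).symm⟩

lemma PolyG.union {A B : Set Pt} (hA : PolyG A) (hB : PolyG B) : PolyG (A ∪ B) := by
  obtain ⟨𝒦, hk, hc, rfl⟩ := hA
  obtain ⟨ℒ, hl, hc', rfl⟩ := hB
  exact ⟨𝒦 ∪ ℒ, hk.union hl, fun K hK => hK.elim (hc K) (hc' K), (sUnion_union _ _).symm⟩

lemma PolyG.inter {A B : Set Pt} (hA : PolyG A) (hB : PolyG B) : PolyG (A ∩ B) := by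
  obtain ⟨𝒦, hk, hc, rfl⟩ := hA
  obtain ⟨ℒ, hl, hc', rfl⟩ := hB
  refine ⟨Set.image2 (· ∩ ·) 𝒦 ℒ, hk.image2 _ hl, ?_, ?_⟩
  · rintro K ⟨K₁, hK₁, K₂, hK₂, rfl⟩
    exact (hc K₁ hK₁).inter (hc' K₂ hK₂)
  · ext x
    simp only [mem_inter_iff, mem_sUnion, mem_image2]
    constructor
    · rintro ⟨⟨K₁, hK₁, hx₁⟩, ⟨K₂, hK₂, hx₂⟩⟩
      exact ⟨K₁ ∩ K₂, ⟨K₁, hK₁, K₂, hK₂, rfl⟩, hx₁, hx₂⟩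
    · rintro ⟨K, ⟨K₁, hK₁, K₂, hK₂, rfl⟩, hx₁, hx₂⟩
      exact ⟨⟨K₁, hK₁, hx₁⟩, ⟨K₂, hK₂, hx₂⟩⟩

lemma PolyG.empty : PolyG (∅ : Set Pt) := ⟨∅, finite_empty, by simp, by simp⟩

lemma PolyG.univ : PolyG (Set.univ : Set Pt) :=
  ⟨{Set.univ}, finite_singleton _, by
    rintro K rfl
    exact ⟨∅, finite_empty, by simp, by simp⟩, by simp⟩

lemma polyG_sInter (𝒮 : Set (Set Pt)) (hfin : 𝒮.Finite) :
    (∀ A ∈ 𝒮, PolyG A) → PolyG (⋂₀ 𝒮) := by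
  refine Set.Finite.induction_on
    (motive := fun 𝒮 _ => (∀ A ∈ 𝒮, PolyG A) → PolyG (⋂₀ 𝒮)) _ hfin ?_ ?_
  · intro _; simpa using PolyG.univ
  · intro A 𝒮 hA hfin ih h
    rw [sInter_insert]
    exact (h A (mem_insert _ _)).inter (ih fun B hB => h B (mem_insert_of_mem _ hB))

lemma IsCell.compl_poly {K : Set Pt} (h : IsCell K) : PolyG Kᶜ := by
  obtain ⟨ℱ, hf, hb, rfl⟩ := h
  rw [compl_sInter]
  refine ⟨compl '' ℱ, hf.image _, ?_, rfl⟩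
  rintro K ⟨F, hF, rfl⟩
  refine ⟨{Fᶜ}, finite_singleton _, ?_, by simp⟩
  rintro G rfl
  rcases hb F hF with h1 | h1
  · exact Or.inr (by rwa [compl_compl])
  · exact Or.inl h1

lemma PolyG.compl {A : Set Pt} (hA : PolyG A) : PolyG Aᶜ := by
  obtain ⟨𝒦, hk, hc, rfl⟩ := hA
  rw [compl_sUnion]
  exact polyG_sInter _ (hk.image _) (by rintro B ⟨K, hK, rfl⟩; exact (hc K hK).compl_poly)

lemma isPoly_of_boolGen {A : Set Pt} (h : BoolGen (halfSpaces 2) A) : PolyG A := by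
  induction h with
  | base A hA =>
    refine ⟨{A}, finite_singleton _, ?_, by simp⟩
    intro K hK
    rw [mem_singleton_iff] at hK; subst hK
    refine ⟨{K}, finite_singleton _, ?_, by simp⟩
    intro F hF
    rw [mem_singleton_iff] at hF; subst hF
    exact Or.inl hA
  | empty => exact PolyG.empty
  | univ => exact PolyG.univ
  | union A B _ _ ihA ihB => exact ihA.union ihB
  | inter A B _ _ ihA ihB => exact ihA.inter ihB
  | compl A _ ihA => exact ihA.compl


end Structure

/-- Two nonempty disjoint polygons of the plane never have the same closure. -/
theorem closures_of_disjoint_polygons_differ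
    (A₁ A₂ : Set (EuclideanSpace ℝ (Fin 2)))
    (h₁ : BoolGen (halfSpaces 2) A₁) (h₂ : BoolGen (halfSpaces 2) A₂)
    (hne₁ : A₁.Nonempty) (hne₂ : A₂.Nonempty) (hdisj : A₁ ∩ A₂ = ∅) :
    closure A₁ ≠ closure A₂ := by
  intro heq
  obtain ⟨𝒦₁, hfin₁, hcell₁, hA₁⟩ := isPoly_of_boolGen h₁
  obtain ⟨𝒦₂, hfin₂, hcell₂, hA₂⟩ := isPoly_of_boolGen h₂
  set C := closure A₁ with hC
  have hcov : ∀ (𝒦 : Set (Set Pt)) (A : Set Pt), 𝒦.Finite → A = ⋃₀ 𝒦 →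
      closure A ⊆ ⋃₀ (closure '' 𝒦) := by
    intro 𝒦 A hfin hA
    have hcl : IsClosed (⋃₀ (closure '' 𝒦)) := by
      rw [sUnion_image]
      exact hfin.isClosed_biUnion fun K _ => isClosed_closure
    refine closure_minimal ?_ hcl
    rw [hA]
    exact sUnion_subset fun K hK =>
      Set.Subset.trans subset_closure (subset_sUnion_of_mem (mem_image_of_mem _ hK))
  have hclosed₁ : ∀ F ∈ closure '' 𝒦₁, IsClosed F := by
    rintro F ⟨K, -, rfl⟩; exact isClosed_closure
  have hclosed₂ : ∀ F ∈ closure '' 𝒦₂, IsClosed F := by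
    rintro F ⟨L, -, rfl⟩; exact isClosed_closure
  have hCne : (univ ∩ C).Nonempty := by rw [univ_inter]; exact hne₁.closure
  obtain ⟨F, hFmem, W, hWopen, -, hWne, hWsub⟩ :=
    exists_relOpen_piece C (closure '' 𝒦₁) (hfin₁.image _) hclosed₁ univ isOpen_univ
      hCne (by rw [univ_inter]; exact hcov _ _ hfin₁ hA₁)
  obtain ⟨K, hK, rfl⟩ := hFmem
  obtain ⟨F₂, hF₂mem, W', hW'open, hW'W, hW'ne, hW'sub⟩ :=
    exists_relOpen_piece C (closure '' 𝒦₂) (hfin₂.image _) hclosed₂ W hWopen hWne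
      (fun x hx => hcov 𝒦₂ A₂ hfin₂ hA₂ (by rw [← heq]; exact hx.2))
  obtain ⟨L, hL, rfl⟩ := hF₂mem
  have hW'K : W' ∩ C ⊆ closure K := fun x hx => hWsub ⟨hW'W hx.1, hx.2⟩
  obtain ⟨x, hx⟩ := hW'ne
  have hKconv : Convex ℝ K := (hcell₁ K hK).convex
  have hLconv : Convex ℝ L := (hcell₂ L hL).convex
  have hxK : x ∈ closure (riSet K) :=
    closure_minimal (subset_closure_riSet hKconv) isClosed_closure (hW'K hx)
  obtain ⟨p, hpW', hpRK⟩ := (mem_closure_iff.1 hxK) W' hW'open hx.1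
  have hpA₁ : p ∈ A₁ := by rw [hA₁]; exact ⟨K, hK, riSet_subset K hpRK⟩
  have hpC : p ∈ C := subset_closure hpA₁
  have hpclL : p ∈ closure L := hW'sub ⟨hpW', hpC⟩
  have hxL : x ∈ closure (riSet L) :=
    closure_minimal (subset_closure_riSet hLconv) isClosed_closure (hW'sub hx)
  obtain ⟨q, hqW', hqRL⟩ := (mem_closure_iff.1 hxL) W' hW'open hx.1
  have hqA₂ : q ∈ A₂ := by rw [hA₂]; exact ⟨L, hL, riSet_subset L hqRL⟩
  have hqC : q ∈ C := by rw [heq]; exact subset_closure hqA₂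
  have hqclK : q ∈ closure K := hW'K ⟨hqW', hqC⟩
  have hm₁ : (2⁻¹ : ℝ) • p + (2⁻¹ : ℝ) • q ∈ riSet K :=
    riSet_openSegment hKconv hpRK hqclK
      ⟨2⁻¹, 2⁻¹, by norm_num, by norm_num, by norm_num, rfl⟩
  have hm₂ : (2⁻¹ : ℝ) • p + (2⁻¹ : ℝ) • q ∈ riSet L :=
    riSet_openSegment hLconv hqRL hpclL
      ⟨2⁻¹, 2⁻¹, by norm_num, by norm_num, by norm_num, by rw [add_comm]⟩
  have hm : (2⁻¹ : ℝ) • p + (2⁻¹ : ℝ) • q ∈ A₁ ∩ A₂ :=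
    ⟨by rw [hA₁]; exact ⟨K, hK, riSet_subset K hm₁⟩,
     by rw [hA₂]; exact ⟨L, hL, riSet_subset L hm₂⟩⟩
  rw [hdisj] at hm
  exact hm
end
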